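/- Let n ≥ 2 be an integer and M ≥ 1. Let φ : ℝ → ℝ be twice continuously differentiable with 1 ≤ φ(x) ≤ M and |φ'(x)| ≤ M for all x, and suppose φ − 1 and φ' are square-integrable. Then there exists a constant C > 0 such that: for every differentiable u : ℝ → ℝ with u and u' square-integrable and ‖u‖_{H¹} ≤ 1/2, if N[φ + u] = N[φ], then |∫_ℝ [ (n φ^{2n−1} (φ')² + (φ − 1)) u + φ^{2n} φ' u' ] dx| ≤ C ‖u‖_{H¹}². -/

import Mathlib

open MeasureTheory

/-- The squared `H¹(ℝ)` norm, `‖u‖_{H¹}² = ∫ u² + ∫ (u')²`. -/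
noncomputable def H1normSq (u : ℝ → ℝ) : ℝ :=
  (∫ x : ℝ, (u x) ^ 2) + ∫ x : ℝ, (deriv u x) ^ 2

/-- The `H¹(ℝ)` norm. -/
noncomputable def H1norm (u : ℝ → ℝ) : ℝ := Real.sqrt (H1normSq u)

/-- The generalized momentum `N[ψ] = ∫ (1/2) ψ^{2n} (ψ')² + (1/2)(ψ-1)²`. -/
noncomputable def genMomentum (n : ℕ) (ψ : ℝ → ℝ) : ℝ :=
  ∫ x : ℝ, ((1 / 2) * ψ x ^ (2 * n) * (deriv ψ x) ^ 2 + (1 / 2) * (ψ x - 1) ^ 2)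

/-! Since `N[φ + u] = N[φ]`, the first variation of `N` at `φ` in direction `u` is minus the
integral of the second-order Taylor remainder of the density `½ a^{2n} p² + ½ (a - 1)²` at
`(φ, φ')` in direction `(u, u')`. The one-dimensional Sobolev embedding `‖u‖_∞ ≤ ‖u‖_{H¹}` keeps
`φ + u` bounded, so together with the bounds on `φ` and `φ'` this remainder is pointwise
`O(u² + u'²)`, and integrating gives `O(‖u‖_{H¹}²)`. -/

open Filter Set

theorem H1norm_sq (u : ℝ → ℝ) : H1norm u ^ 2 = H1normSq u :=
  Real.sq_sqrt (add_nonneg (integral_nonneg fun _ => sq_nonneg _)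
    (integral_nonneg fun _ => sq_nonneg _))

theorem sq_le_H1normSq {u : ℝ → ℝ} (hu : Differentiable ℝ u)
    (hu2 : Integrable (fun x => u x ^ 2)) (hu2' : Integrable (fun x => deriv u x ^ 2)) (x : ℝ) :
    u x ^ 2 ≤ H1normSq u := by
  have hderiv : ∀ y, HasDerivAt (fun z => u z ^ 2) (2 * u y * deriv u y) y := fun y => by
    simpa using (hu y).hasDerivAt.fun_pow 2
  have hbound : ∀ y, |2 * u y * deriv u y| ≤ u y ^ 2 + deriv u y ^ 2 := fun y => by
    rw [abs_mul, abs_mul, abs_two, ← sq_abs (u y), ← sq_abs (deriv u y)]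
    exact two_mul_le_add_sq _ _
  have hint : Integrable (fun y => 2 * u y * deriv u y) :=
    (hu2.add hu2').mono' ((hu.continuous.measurable.const_mul 2).mul
      (measurable_deriv u)).aestronglyMeasurable (ae_of_all _ hbound)
  have hlim : Tendsto (fun y => u y ^ 2) atTop (nhds 0) :=
    tendsto_zero_of_hasDerivAt_of_integrableOn_Ioi (a := x) (fun y _ => hderiv y)
      hint.integrableOn hu2.integrableOn
  have hftc := integral_Ioi_of_hasDerivAt_of_tendsto' (a := x) (fun y _ => hderiv y)
    hint.integrableOn hlim
  calc u x ^ 2 = -∫ y in Ioi x, 2 * u y * deriv u y := by linarith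
    _ ≤ ∫ y in Ioi x, |2 * u y * deriv u y| := by
        refine (neg_le_abs _).trans ?_
        exact abs_integral_le_integral_abs
    _ ≤ ∫ y, |2 * u y * deriv u y| :=
        setIntegral_le_integral hint.abs (ae_of_all _ fun y => abs_nonneg _)
    _ ≤ ∫ y, (u y ^ 2 + deriv u y ^ 2) := integral_mono hint.abs (hu2.add hu2') hbound
    _ = H1normSq u := integral_add hu2 hu2'

theorem abs_le_H1norm {u : ℝ → ℝ} (hu : Differentiable ℝ u)
    (hu2 : Integrable (fun x => u x ^ 2)) (hu2' : Integrable (fun x => deriv u x ^ 2)) (x : ℝ) :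
    |u x| ≤ H1norm u := by
  rw [← Real.sqrt_sq_eq_abs]
  exact Real.sqrt_le_sqrt (sq_le_H1normSq hu hu2 hu2' x)

theorem abs_add_pow_sub_pow_sub_le {B x t : ℝ} (hB : 1 ≤ B) (hx : |x| ≤ B) (hxt : |x + t| ≤ B)
    (m : ℕ) : |(x + t) ^ m - x ^ m - m * x ^ (m - 1) * t| ≤ m ^ 2 * B ^ m * t ^ 2 := by
  induction m with
  | zero => simp
  | succ m ih =>
    have key : (x + t) ^ (m + 1) - x ^ (m + 1) - ((m + 1 : ℕ) : ℝ) * x ^ (m + 1 - 1) * t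
        = (x + t) * ((x + t) ^ m - x ^ m - m * x ^ (m - 1) * t) + m * x ^ (m - 1) * t ^ 2 := by
      rcases m with _ | m <;> simp only [Nat.add_sub_cancel, Nat.cast_add, Nat.cast_one] <;> ring
    have hxm : |x ^ (m - 1)| ≤ B ^ (m + 1) := by
      rw [abs_pow]
      exact (pow_le_pow_left₀ (abs_nonneg x) hx _).trans (pow_le_pow_right₀ hB (by omega))
    have hB0 : 0 ≤ B := by linarith
    rw [key]
    calc _ ≤ |x + t| * |(x + t) ^ m - x ^ m - m * x ^ (m - 1) * t|
          + m * |x ^ (m - 1)| * t ^ 2 := by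
          refine (abs_add_le _ _).trans_eq ?_
          rw [abs_mul, abs_mul, abs_mul, Nat.abs_cast, abs_sq]
      _ ≤ B * (m ^ 2 * B ^ m * t ^ 2) + m * B ^ (m + 1) * t ^ 2 := by gcongr
      _ = ((m : ℝ) ^ 2 + m) * B ^ (m + 1) * t ^ 2 := by ring
      _ ≤ ((m + 1 : ℕ) : ℝ) ^ 2 * B ^ (m + 1) * t ^ 2 := by gcongr; push_cast; nlinarith

theorem pow_two_mul_le_of_abs_le {a B : ℝ} (h : |a| ≤ B) (n : ℕ) :
    a ^ (2 * n) ≤ B ^ (2 * n) := by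
  rw [← (even_two_mul n).pow_abs]
  exact pow_le_pow_left₀ (abs_nonneg a) h _

noncomputable def momentumDensity (n : ℕ) (a p : ℝ) : ℝ :=
  (1 / 2) * a ^ (2 * n) * p ^ 2 + (1 / 2) * (a - 1) ^ 2

noncomputable def momentumDensityDifferential (n : ℕ) (a p t q : ℝ) : ℝ :=
  (n * a ^ (2 * n - 1) * p ^ 2 + (a - 1)) * t + a ^ (2 * n) * p * q

theorem genMomentum_eq_integral_momentumDensity (n : ℕ) (ψ : ℝ → ℝ) :
    genMomentum n ψ = ∫ x, momentumDensity n (ψ x) (deriv ψ x) := rfl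

theorem abs_momentumDensity_sub_sub_le {n : ℕ} {M a p t q : ℝ} (ha : |a| ≤ M) (hp : |p| ≤ M)
    (ht : |t| ≤ 1) :
    |momentumDensity n (a + t) (p + q) - momentumDensity n a p
        - momentumDensityDifferential n a p t q|
      ≤ (2 * n ^ 2 + n + 1) * (M + 1) ^ (2 * n + 2) * (t ^ 2 + q ^ 2) := by
  set B := M + 1
  set E := (a + t) ^ (2 * n) - a ^ (2 * n) - 2 * n * a ^ (2 * n - 1) * t
  set D := (a + t) ^ (2 * n) - a ^ (2 * n)
  have hB : 1 ≤ B := by linarith [abs_nonneg a]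
  have haB : |a| ≤ B := by linarith
  have hatB : |a + t| ≤ B := (abs_add_le a t).trans (by linarith)
  have hpB : |p| ≤ B := by linarith
  have hE : |E| ≤ (2 * n) ^ 2 * B ^ (2 * n) * t ^ 2 := by
    have h := abs_add_pow_sub_pow_sub_le hB haB hatB (2 * n)
    push_cast at h
    exact h
  have hD : |D| ≤ 2 * n * B ^ (2 * n + 1) * |t| := by
    calc |D| ≤ |a + t - a| * (2 * n : ℕ) * max |a + t| |a| ^ (2 * n - 1) := abs_pow_sub_pow_le ..
      _ ≤ |t| * (2 * n) * B ^ (2 * n + 1) := by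
        rw [add_sub_cancel_left]; push_cast
        gcongr
        exact (pow_le_pow_left₀ (by positivity) (max_le hatB haB) _).trans
          (pow_le_pow_right₀ hB (by omega))
      _ = 2 * n * B ^ (2 * n + 1) * |t| := by ring
  have hpow0 : 0 ≤ (a + t) ^ (2 * n) := (even_two_mul n).pow_nonneg _
  have hpow : (a + t) ^ (2 * n) ≤ B ^ (2 * n) := by
    rw [← (even_two_mul n).pow_abs]
    exact pow_le_pow_left₀ (abs_nonneg _) hatB _
  have hsplit : momentumDensity n (a + t) (p + q) - momentumDensity n a p
      - momentumDensityDifferential n a p t q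
      = (1 / 2) * p ^ 2 * E + p * q * D + (1 / 2) * (a + t) ^ (2 * n) * q ^ 2
        + (1 / 2) * t ^ 2 := by
    simp only [momentumDensity, momentumDensityDifferential, E, D]; ring
  have hqt : 2 * (|q| * |t|) ≤ t ^ 2 + q ^ 2 := by
    nlinarith [two_mul_le_add_sq |q| |t|, sq_abs q, sq_abs t]
  have hBq : B ^ (2 * n) * q ^ 2 ≤ B ^ (2 * n + 2) * (t ^ 2 + q ^ 2) :=
    mul_le_mul (pow_le_pow_right₀ hB (by omega)) (by nlinarith [sq_nonneg t]) (sq_nonneg q)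
      (by positivity)
  have hBt : t ^ 2 ≤ B ^ (2 * n + 2) * (t ^ 2 + q ^ 2) := by
    nlinarith [one_le_pow₀ (n := 2 * n + 2) hB, sq_nonneg t, sq_nonneg q]
  rw [hsplit]
  calc _ ≤ (1 / 2) * |p| ^ 2 * |E| + |p| * |q| * |D| + (1 / 2) * (a + t) ^ (2 * n) * q ^ 2
          + (1 / 2) * t ^ 2 := by
        refine (abs_add_le _ _).trans (add_le_add ((abs_add_le _ _).trans
          (add_le_add (abs_add_le _ _) le_rfl)) le_rfl) |>.trans_eq ?_
        simp only [abs_mul, abs_pow, abs_of_nonneg hpow0, abs_of_pos (one_half_pos (α := ℝ)),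
          sq_abs]
    _ ≤ (1 / 2) * B ^ 2 * ((2 * n) ^ 2 * B ^ (2 * n) * t ^ 2)
          + B * |q| * (2 * n * B ^ (2 * n + 1) * |t|)
          + (1 / 2) * B ^ (2 * n) * q ^ 2 + (1 / 2) * t ^ 2 := by
        gcongr
    _ = 2 * n ^ 2 * B ^ (2 * n + 2) * t ^ 2 + n * B ^ (2 * n + 2) * (2 * (|q| * |t|))
          + (1 / 2) * (B ^ (2 * n) * q ^ 2) + (1 / 2) * t ^ 2 := by ring
    _ ≤ 2 * n ^ 2 * B ^ (2 * n + 2) * t ^ 2 + n * B ^ (2 * n + 2) * (t ^ 2 + q ^ 2)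
          + (1 / 2) * (B ^ (2 * n + 2) * (t ^ 2 + q ^ 2))
          + (1 / 2) * (B ^ (2 * n + 2) * (t ^ 2 + q ^ 2)) := by gcongr
    _ ≤ (2 * n ^ 2 + n + 1) * B ^ (2 * n + 2) * (t ^ 2 + q ^ 2) := by
        have hBpow : 0 ≤ B ^ (2 * n + 2) := by positivity
        nlinarith [mul_nonneg (mul_nonneg (sq_nonneg (n : ℝ)) hBpow) (sq_nonneg q)]

section Integrability

variable {α : Type*} [MeasurableSpace α] {μ : Measure α}

theorem integrable_sq_add {f g : α → ℝ} (hfm : AEStronglyMeasurable f μ)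
    (hgm : AEStronglyMeasurable g μ) (hf : Integrable (fun x => f x ^ 2) μ)
    (hg : Integrable (fun x => g x ^ 2) μ) : Integrable (fun x => (f x + g x) ^ 2) μ :=
  (memLp_two_iff_integrable_sq (hfm.add hgm)).1
    (((memLp_two_iff_integrable_sq hfm).2 hf).add ((memLp_two_iff_integrable_sq hgm).2 hg))

theorem integrable_momentumDensity {n : ℕ} {ψ ψ' : α → ℝ} {B : ℝ} (hψ : ∀ x, |ψ x| ≤ B)
    (hψm : Measurable ψ) (hψ'm : Measurable ψ') (h1 : Integrable (fun x => (ψ x - 1) ^ 2) μ)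
    (h2 : Integrable (fun x => ψ' x ^ 2) μ) :
    Integrable (fun x => momentumDensity n (ψ x) (ψ' x)) μ := by
  refine ((h2.const_mul (B ^ (2 * n))).add h1).mono'
    (by simp only [momentumDensity]; fun_prop) (ae_of_all _ fun x => ?_)
  have hpow0 : 0 ≤ ψ x ^ (2 * n) := (even_two_mul n).pow_nonneg _
  have hpow := pow_two_mul_le_of_abs_le (hψ x) n
  have hnonneg : 0 ≤ momentumDensity n (ψ x) (ψ' x) := by unfold momentumDensity; positivity
  rw [Real.norm_eq_abs, abs_of_nonneg hnonneg, momentumDensity, Pi.add_apply]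
  nlinarith [mul_le_mul_of_nonneg_right hpow (sq_nonneg (ψ' x)), sq_nonneg (ψ x - 1),
    mul_nonneg hpow0 (sq_nonneg (ψ' x))]

theorem abs_integral_le_of_abs_sub_sub_le {f g l h : α → ℝ} (hf : Integrable f μ)
    (hg : Integrable g μ) (hh : Integrable h μ) (hl : AEStronglyMeasurable l μ)
    (hfg : ∫ x, f x ∂μ = ∫ x, g x ∂μ) (hbound : ∀ x, |f x - g x - l x| ≤ h x) :
    |∫ x, l x ∂μ| ≤ ∫ x, h x ∂μ := by
  have hr : Integrable (fun x => f x - g x - l x) μ :=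
    hh.mono' ((hf.aestronglyMeasurable.sub hg.aestronglyMeasurable).sub hl) (ae_of_all _ hbound)
  have hl_eq : ∫ x, l x ∂μ = -∫ x, (f x - g x - l x) ∂μ := by
    have hfg' : Integrable (fun x => f x - g x) μ := hf.sub hg
    calc ∫ x, l x ∂μ = ∫ x, ((f x - g x) - (f x - g x - l x)) ∂μ := by congr 1; ext; ring
      _ = -∫ x, (f x - g x - l x) ∂μ := by
        rw [integral_sub hfg' hr, integral_sub hf hg, hfg, sub_self, zero_sub]
  rw [hl_eq, abs_neg]
  exact abs_integral_le_integral_abs.trans (integral_mono hr.abs hh hbound)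

end Integrability

theorem stmt_5 (n : ℕ) (M : ℝ) (hM : 1 ≤ M)
    (φ : ℝ → ℝ) (hreg : ContDiff ℝ 2 φ)
    (hφ1 : ∀ x, 1 ≤ φ x) (hφM : ∀ x, φ x ≤ M) (hφ' : ∀ x, |deriv φ x| ≤ M)
    (hint1 : Integrable (fun x => (φ x - 1) ^ 2))
    (hint2 : Integrable (fun x => (deriv φ x) ^ 2)) :
    ∃ C : ℝ, 0 < C ∧
      ∀ u : ℝ → ℝ, Differentiable ℝ u →
        Integrable (fun x => (u x) ^ 2) → Integrable (fun x => (deriv u x) ^ 2) →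
        H1norm u ≤ 1 / 2 →
        genMomentum n (fun x => φ x + u x) = genMomentum n φ →
        |∫ x : ℝ, ((n * φ x ^ (2 * n - 1) * (deriv φ x) ^ 2 + (φ x - 1)) * u x
            + φ x ^ (2 * n) * deriv φ x * deriv u x)| ≤ C * (H1norm u) ^ 2 := by
  have hφd : Differentiable ℝ φ := hreg.differentiable (by norm_num)
  have hφ_abs : ∀ x, |φ x| ≤ M := fun x => abs_le.2 ⟨by linarith [hφ1 x, hφM x], hφM x⟩
  refine ⟨(2 * n ^ 2 + n + 1) * (M + 1) ^ (2 * n + 2), by positivity, ?_⟩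
  intro u hu hu2 hu2' hH1 hN
  have hu_abs : ∀ x, |u x| ≤ 1 := fun x =>
    (abs_le_H1norm hu hu2 hu2' x).trans (hH1.trans (by norm_num))
  have hφm : Measurable φ := hφd.continuous.measurable
  have hum : Measurable u := hu.continuous.measurable
  have hφ'm : Measurable (deriv φ) := measurable_deriv φ
  have hu'm : Measurable (deriv u) := measurable_deriv u
  have hderiv : ∀ x, deriv (fun y => φ y + u y) x = deriv φ x + deriv u x := fun x =>
    deriv_add (hφd x) (hu x)
  rw [genMomentum_eq_integral_momentumDensity, genMomentum_eq_integral_momentumDensity] at hN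
  simp only [hderiv] at hN
  have hint_sum : Integrable (fun x => momentumDensity n (φ x + u x) (deriv φ x + deriv u x)) :=
    integrable_momentumDensity (B := M + 1)
      (fun x => (abs_add_le _ _).trans (add_le_add (hφ_abs x) (hu_abs x))) (by fun_prop)
      (by fun_prop)
      (by simpa only [sub_add_eq_add_sub] using
        integrable_sq_add (by fun_prop) hum.aestronglyMeasurable hint1 hu2)
      (integrable_sq_add hφ'm.aestronglyMeasurable hu'm.aestronglyMeasurable hint2 hu2')
  refine (abs_integral_le_of_abs_sub_sub_le hint_sum
    (integrable_momentumDensity hφ_abs hφm hφ'm hint1 hint2) ((hu2.add hu2').const_mul _)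
    (by simp only [momentumDensityDifferential]; fun_prop) hN
    (fun x => abs_momentumDensity_sub_sub_le (hφ_abs x) (hφ' x) (hu_abs x))).trans_eq ?_
  rw [integral_const_mul, H1norm_sq, H1normSq, ← integral_add hu2 hu2']
  rfl
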